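/- Let A be an n×n pattern matrix and B an n×m pattern matrix, and let Ā be obtained from A by keeping all off-diagonal entries and replacing each diagonal entry A_ii by ∗ if A_ii = 0 and by ? otherwise. Then the structured system (A,B) is strongly structurally controllable if and only if both G([A B]) and G([Ā B]) are colorable. -/

import Mathlib

/-- The symbols of a pattern matrix: fixed zero (`0`), arbitrary nonzero (`∗`),
and arbitrary (`?`). -/
inductive PSym : Type
  | zero
  | star
  | arb
  deriving DecidableEq

open Matrix

/-- The pattern class of a pattern matrix: real matrices that are `0` where the pattern
is `0`, nonzero where the pattern is `∗`, and unrestricted where the pattern is `?`. -/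
def PatternClass {R C : Type*} (M : Matrix R C PSym) : Set (Matrix R C ℝ) :=
  {A | ∀ i j, (M i j = PSym.zero → A i j = 0) ∧ (M i j = PSym.star → A i j ≠ 0)}

/-- A pattern matrix has full row rank if every member of its pattern class
has full row rank. -/
def PatternFullRowRank {R C : Type*} [Fintype R] [Fintype C] (M : Matrix R C PSym) : Prop :=
  ∀ A ∈ PatternClass M, A.rank = Fintype.card R

/-- Hautus test: `(A, B)` is controllable iff `[A - λI, B]` has rank `n` for all `λ ∈ ℂ`. -/
def Controllable {n m : ℕ} (A : Matrix (Fin n) (Fin n) ℝ) (B : Matrix (Fin n) (Fin m) ℝ) : Prop :=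
  ∀ l : ℂ, (Matrix.fromCols (A.map (Complex.ofReal) - l • (1 : Matrix (Fin n) (Fin n) ℂ))
      (B.map (Complex.ofReal))).rank = n

/-- Hautus test for stabilizability: `[A - λI, B]` has rank `n` for all `λ` with `Re λ ≥ 0`. -/
def Stabilizable {n m : ℕ} (A : Matrix (Fin n) (Fin n) ℝ) (B : Matrix (Fin n) (Fin m) ℝ) : Prop :=
  ∀ l : ℂ, 0 ≤ l.re →
    (Matrix.fromCols (A.map (Complex.ofReal) - l • (1 : Matrix (Fin n) (Fin n) ℂ))
      (B.map (Complex.ofReal))).rank = n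

/-- Strong structural controllability of the structured system `(𝒜, ℬ)`. -/
def StrStrControllable {n m : ℕ} (𝒜 : Matrix (Fin n) (Fin n) PSym)
    (ℬ : Matrix (Fin n) (Fin m) PSym) : Prop :=
  ∀ A ∈ PatternClass 𝒜, ∀ B ∈ PatternClass ℬ, Controllable A B

/-- Strong structural stabilizability of the structured system `(𝒜, ℬ)`. -/
def StrStrStabilizable {n m : ℕ} (𝒜 : Matrix (Fin n) (Fin n) PSym)
    (ℬ : Matrix (Fin n) (Fin m) PSym) : Prop :=
  ∀ A ∈ PatternClass 𝒜, ∀ B ∈ PatternClass ℬ, Stabilizable A B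

/-- The pattern matrix `Ā` obtained from `𝒜` by replacing each diagonal entry by `∗`
if it is `0` and by `?` otherwise, keeping all off-diagonal entries. -/
def barPattern {n : ℕ} (𝒜 : Matrix (Fin n) (Fin n) PSym) : Matrix (Fin n) (Fin n) PSym :=
  fun i j => if i = j then (if 𝒜 i i = PSym.zero then PSym.star else PSym.arb) else 𝒜 i j

/-- The sets of black nodes obtainable in `G(M)` by repeatedly applying the color change
rule, starting from the all-white coloring. The colorable nodes are the rows of `M`;
every node of `G(M)` corresponds to a column `c`, whose out-neighbors are the rows `k`
with `M k c ≠ 0`, and the edge from `c` to `k` is in `E_∗` iff `M k c = ∗`. A step colors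
`j` black when some node `c` has `j` as its only white out-neighbor and `(c, j) ∈ E_∗`. -/
inductive ColorStep {R C : Type*} (M : Matrix R C PSym) : Set R → Prop
  | init : ColorStep M ∅
  | step (S : Set R) (c : C) (j : R)
      (hS : ColorStep M S)
      (hstar : M j c = PSym.star)
      (hwhite : j ∉ S)
      (huniq : ∀ k : R, M k c ≠ PSym.zero → k ∉ S → k = j) :
      ColorStep M (insert j S)

/-- `G(M)` is colorable if all row-nodes can be colored black by repeated application
of the color change rule. -/
def PatternColorable {R C : Type*} (M : Matrix R C PSym) : Prop :=
  ColorStep M Set.univ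

/-!
A left null vector `x` of a realization of a pattern vanishes on every node the coloring turns
black, so colorability forces full row rank. Conversely, if the coloring stalls with a nonempty
white set `W`, no column has a `∗` in `W` as its only nonzero entry in `W`; then each column can
be realized with entries summing to zero over `W`, and the indicator of `W` is a left null vector.
In the Hautus test, `[A - λI, B]` realizes `[𝒜 ℬ]` at `λ = 0` and `[Ā ℬ]` at `λ ≠ 0`, since the
diagonal entry `-λ` is nonzero where `𝒜ᵢᵢ = 0`. A singular realization of `[Ā ℬ]` becomes one of
the form `[A - I, B]` after rescaling its columns.
-/

open Matrix

variable {R C K : Type*}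

/-- `PatternClass M` is `PatternClassOver ℝ M`; complex realizations arise because the Hautus
test evaluates `A - λI` at complex `λ`. -/
def PatternClassOver (K : Type*) [Zero K] (M : Matrix R C PSym) : Set (Matrix R C K) :=
  {A | ∀ i j, (M i j = PSym.zero → A i j = 0) ∧ (M i j = PSym.star → A i j ≠ 0)}

namespace PatternClassOver

theorem map_mem {L : Type*} [NonAssocSemiring K] [NonAssocSemiring L] {f : K →+* L}
    (hf : Function.Injective f) {M : Matrix R C PSym} {A : Matrix R C K}
    (hA : A ∈ PatternClassOver K M) : A.map f ∈ PatternClassOver L M := fun i j =>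
  ⟨fun h => by simp [(hA i j).1 h], fun h => (map_ne_zero_iff f hf).2 ((hA i j).2 h)⟩

theorem fromCols_mem_iff {C' : Type*} [Zero K] {M : Matrix R C PSym} {M' : Matrix R C' PSym}
    {A : Matrix R C K} {A' : Matrix R C' K} :
    fromCols A A' ∈ PatternClassOver K (fromCols M M') ↔
      A ∈ PatternClassOver K M ∧ A' ∈ PatternClassOver K M' := by
  simp only [PatternClassOver, Set.mem_ofPred_eq, Sum.forall, fromCols_apply_inl,
    fromCols_apply_inr, ← forall_and]

theorem mul_diagonal_mem [Fintype C] [DecidableEq C] [Semiring K] [NoZeroDivisors K]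
    {M : Matrix R C PSym} {A : Matrix R C K} (hA : A ∈ PatternClassOver K M) {t : C → K}
    (ht : ∀ c, t c ≠ 0) : A * diagonal t ∈ PatternClassOver K M := fun i j =>
  ⟨fun h => by simp [(hA i j).1 h], fun h => by simpa using ⟨(hA i j).2 h, ht j⟩⟩

theorem sub_smul_one_mem_barPattern {n : ℕ} [Ring K] {𝒜 : Matrix (Fin n) (Fin n) PSym}
    {A : Matrix (Fin n) (Fin n) K} (hA : A ∈ PatternClassOver K 𝒜) {l : K} (hl : l ≠ 0) :
    A - l • 1 ∈ PatternClassOver K (barPattern 𝒜) := by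
  intro i j
  rcases eq_or_ne i j with rfl | hij
  · by_cases h : 𝒜 i i = PSym.zero <;> simp [barPattern, h, (hA i i).1, hl]
  · simpa [barPattern, hij] using hA i j

/-- The `∗` diagonal entries of `N` (where `𝒜ᵢᵢ = 0`) are scaled to `-1`, and a diagonal entry
`-1` where `𝒜ᵢᵢ ≠ 0` is doubled. -/
theorem exists_mul_diagonal_add_one_mem {n : ℕ} [Field K] [NeZero (2 : K)]
    {𝒜 : Matrix (Fin n) (Fin n) PSym} {N : Matrix (Fin n) (Fin n) K}
    (hN : N ∈ PatternClassOver K (barPattern 𝒜)) :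
    ∃ t : Fin n → K, N * diagonal t + 1 ∈ PatternClassOver K 𝒜 := by
  classical
  have hdiag : ∀ i, 𝒜 i i = PSym.zero → N i i ≠ 0 := fun i h =>
    (hN i i).2 (by simp [barPattern, h])
  have h21 : (2 : K) ≠ 1 := fun h => one_ne_zero (by linear_combination h)
  set t : Fin n → K := fun i =>
    if 𝒜 i i = PSym.zero then -(N i i)⁻¹ else if N i i = -1 then 2 else 1
  have ht : ∀ i, t i ≠ 0 := fun i => by
    by_cases h : 𝒜 i i = PSym.zero
    · simp [t, h, hdiag]
    · simp only [t, h, if_false]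
      split_ifs <;> simp [two_ne_zero]
  refine ⟨t, fun i j => ?_⟩
  rcases eq_or_ne i j with rfl | hij
  · by_cases h : 𝒜 i i = PSym.zero
    · simp [t, h, hdiag i h]
    · by_cases h' : N i i = -1 <;> simp [t, h, h', h21, ← eq_neg_iff_add_eq_zero]
  · simpa [barPattern, hij] using mul_diagonal_mem hN ht i j

end PatternClassOver

theorem Matrix.rank_eq_card_iff_vecMul_eq_zero [Field K] [Fintype R] [Fintype C]
    (N : Matrix R C K) :
    N.rank = Fintype.card R ↔ ∀ x : R → K, x ᵥ* N = 0 → x = 0 := by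
  rw [rank_eq_finrank_span_row, eq_comm, ← Set.finrank,
    ← linearIndependent_iff_card_eq_finrank_span, Fintype.linearIndependent_iff]
  simp only [vecMul_eq_sum, funext_iff]
  rfl

theorem Matrix.vecMul_fromCols_eq_zero_iff {C' : Type*} [Semiring K] [Fintype R] {x : R → K}
    {A : Matrix R C K} {A' : Matrix R C' K} :
    x ᵥ* fromCols A A' = 0 ↔ x ᵥ* A = 0 ∧ x ᵥ* A' = 0 := by
  simp only [vecMul_fromCols, funext_iff, Sum.forall, Sum.elim_inl, Sum.elim_inr, Pi.zero_apply]

section Coloring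

variable [Fintype R] [Semiring K] [NoZeroDivisors K] {M : Matrix R C PSym} {N : Matrix R C K}

/-- The forcing column has a single nonzero entry among the white rows, so the null-vector
equation at that column isolates the newly colored row. -/
theorem ColorStep.apply_eq_zero_of_vecMul_eq_zero {S : Set R} (hS : ColorStep M S)
    (hN : N ∈ PatternClassOver K M) {x : R → K} (hx : x ᵥ* N = 0) : ∀ j ∈ S, x j = 0 := by
  induction hS with
  | init => simp
  | step S c j _ hstar _ huniq ih =>
    rintro k (rfl | hkS)
    · have hc : ∑ i, x i * N i c = x k * N k c := by
        refine Finset.sum_eq_single k (fun i _ hik => ?_) (by simp)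
        by_cases hiS : i ∈ S
        · simp [ih i hiS]
        · by_cases hi0 : M i c = PSym.zero
          · simp [(hN i c).1 hi0]
          · exact absurd (huniq i hi0 hiS) hik
      have hxc : ∑ i, x i * N i c = 0 := congrFun hx c
      exact (mul_eq_zero.1 (hc ▸ hxc)).resolve_right ((hN k c).2 hstar)
    · exact ih k hkS

theorem PatternColorable.eq_zero_of_vecMul_eq_zero (hM : PatternColorable M)
    (hN : N ∈ PatternClassOver K M) {x : R → K} (hx : x ᵥ* N = 0) : x = 0 :=
  funext fun j => ColorStep.apply_eq_zero_of_vecMul_eq_zero hM hN hx j trivial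

end Coloring

theorem PatternColorable.rank_eq_card [Field K] [Fintype R] [Fintype C]
    {M : Matrix R C PSym} (hM : PatternColorable M) {N : Matrix R C K}
    (hN : N ∈ PatternClassOver K M) :
    N.rank = Fintype.card R :=
  (rank_eq_card_iff_vecMul_eq_zero N).2 fun _ => hM.eq_zero_of_vecMul_eq_zero hN

theorem Controllable.eq_zero_of_vecMul_eq_zero {n m : ℕ} {A : Matrix (Fin n) (Fin n) ℝ}
    {B : Matrix (Fin n) (Fin m) ℝ} (h : Controllable A B) (l : ℝ) {x : Fin n → ℝ}
    (hA : x ᵥ* (A - l • 1) = 0) (hB : x ᵥ* B = 0) : x = 0 := by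
  have hmap : fromCols (A.map Complex.ofReal - (l : ℂ) • (1 : Matrix (Fin n) (Fin n) ℂ))
      (B.map Complex.ofReal) = (fromCols (A - l • 1) B).map Complex.ofRealHom := by
    ext i (j | j)
    · by_cases hij : i = j <;> simp [hij]
    · simp
  have hrank := (rank_eq_card_iff_vecMul_eq_zero _).1 <|
    (hmap ▸ h l).trans (Fintype.card_fin n).symm
  have hx := hrank (Complex.ofRealHom ∘ x) <| funext fun c => by
    rw [← RingHom.map_vecMul, vecMul_fromCols, hA, hB]
    simp
  exact funext fun i => by simpa using congrFun hx i

theorem exists_stalled_of_not_colorable [Fintype R] {M : Matrix R C PSym}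
    (h : ¬ PatternColorable M) :
    ∃ W : Finset R, W.Nonempty ∧
      ∀ c, ∀ j ∈ W, M j c = PSym.star → ∃ k ∈ W, k ≠ j ∧ M k c ≠ PSym.zero := by
  classical
  obtain ⟨S, hS, hmax⟩ := Finset.exists_max_image
    (Finset.univ.filter fun S : Finset R => ColorStep M ↑S) Finset.card
    ⟨∅, by simpa using ColorStep.init⟩
  simp only [Finset.mem_filter, Finset.mem_univ, true_and] at hS hmax
  refine ⟨Sᶜ, ?_, fun c j hj hstar => ?_⟩
  · rw [Finset.nonempty_iff_ne_empty, Ne, Finset.compl_eq_empty_iff]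
    rintro rfl
    exact h (by simpa [PatternColorable] using hS)
  · rw [Finset.mem_compl] at hj
    by_contra! hstuck
    have hstep : ColorStep M ↑(insert j S) := by
      rw [Finset.coe_insert]
      exact ColorStep.step _ c j hS hstar (by simpa using hj) fun k hk hkS =>
        not_not.1 fun hkj => hk (hstuck k (by simpa using hkS) hkj)
    have := hmax _ hstep
    rw [Finset.card_insert_of_notMem hj] at this
    omega

/-- Put `1` on all nonzero positions, then replace the entry at one nonzero position `b ∈ W` by
`1 - s`, where `s` is the number of nonzero positions in `W`; `hW` gives `s ≥ 2` if `p b = ∗`. -/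
theorem exists_realization_sum_eq_zero [Ring K] [CharZero K] (p : R → PSym) (W : Finset R)
    (hW : ∀ j ∈ W, p j = PSym.star → ∃ k ∈ W, k ≠ j ∧ p k ≠ PSym.zero) :
    ∃ v : R → K, (∀ k, (p k = PSym.zero → v k = 0) ∧ (p k = PSym.star → v k ≠ 0)) ∧
      ∑ k ∈ W, v k = 0 := by
  classical
  set u : R → K := fun k => if p k ≠ PSym.zero then 1 else 0
  set S := W.filter fun k => p k ≠ PSym.zero
  have hu : ∑ k ∈ W, u k = S.card := by simp only [u, S, Finset.sum_boole]
  rcases S.eq_empty_or_nonempty with hS | ⟨b, hb⟩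
  · refine ⟨u, fun k => ⟨fun h => by simp [u, h], fun h => by simp [u, h]⟩, by simp [hu, hS]⟩
  · rw [Finset.mem_filter] at hb
    refine ⟨u - Pi.single b (S.card : K), fun k => ⟨fun h => ?_, fun h => ?_⟩, ?_⟩
    · have hkb : k ≠ b := by rintro rfl; exact hb.2 h
      simp [u, h, hkb]
    · rcases eq_or_ne k b with rfl | hkb
      · obtain ⟨k', hk'W, hk'k, hk'⟩ := hW k hb.1 h
        have h2 : 2 ≤ S.card := Finset.one_lt_card.2
          ⟨k, Finset.mem_filter.2 hb, k', Finset.mem_filter.2 ⟨hk'W, hk'⟩, hk'k.symm⟩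
        have : (S.card : K) ≠ 1 := by exact_mod_cast (by omega : S.card ≠ 1)
        simpa [u, hb.2, sub_eq_zero] using this.symm
      · simp [u, h, hkb]
    · simp [Finset.sum_sub_distrib, hu, Finset.sum_pi_single', hb.1]

theorem exists_vecMul_eq_zero_of_not_colorable [Fintype R] [Ring K] [CharZero K]
    {M : Matrix R C PSym} (h : ¬ PatternColorable M) :
    ∃ N ∈ PatternClassOver K M, ∃ x : R → K, x ≠ 0 ∧ x ᵥ* N = 0 := by
  classical
  obtain ⟨W, ⟨w, hw⟩, hW⟩ := exists_stalled_of_not_colorable h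
  choose v hv hvW using fun c => exists_realization_sum_eq_zero (K := K) (M · c) W (hW c)
  refine ⟨of fun i c => v c i, fun i c => hv c i, fun k => if k ∈ W then 1 else 0,
    fun hx => by simpa [hw] using congrFun hx w, funext fun c => ?_⟩
  simpa [vecMul, dotProduct, Finset.sum_ite_mem] using hvW c

theorem exists_fromCols_vecMul_eq_zero_of_not_colorable [Fintype R] [Ring K] [CharZero K]
    {C' : Type*} {M : Matrix R C PSym} {M' : Matrix R C' PSym}
    (h : ¬ PatternColorable (fromCols M M')) :
    ∃ N ∈ PatternClassOver K M, ∃ N' ∈ PatternClassOver K M',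
      ∃ x : R → K, x ≠ 0 ∧ x ᵥ* N = 0 ∧ x ᵥ* N' = 0 := by
  obtain ⟨N, hN, x, hx, hxN⟩ := exists_vecMul_eq_zero_of_not_colorable (K := K) h
  rw [← fromCols_toCols N, PatternClassOver.fromCols_mem_iff] at hN
  rw [← fromCols_toCols N, vecMul_fromCols_eq_zero_iff] at hxN
  exact ⟨_, hN.1, _, hN.2, x, hx, hxN⟩

/-- **Theorem 3 (graph-theoretic conditions for controllability).** `(𝒜, ℬ)` is strongly
structurally controllable iff both `G([𝒜 ℬ])` and `G([𝒜bar ℬ])` are colorable. -/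
theorem ssc_iff_colorable {n m : ℕ} (𝒜 : Matrix (Fin n) (Fin n) PSym)
    (ℬ : Matrix (Fin n) (Fin m) PSym) :
    StrStrControllable 𝒜 ℬ ↔
      PatternColorable (Matrix.fromCols 𝒜 ℬ) ∧
      PatternColorable (Matrix.fromCols (barPattern 𝒜) ℬ) := by
  constructor
  · intro h
    refine ⟨not_not.1 fun hc => ?_, not_not.1 fun hc => ?_⟩
    · obtain ⟨A, hA, B, hB, x, hx, hxA, hxB⟩ :=
        exists_fromCols_vecMul_eq_zero_of_not_colorable (K := ℝ) hc
      exact hx <| (h A hA B hB).eq_zero_of_vecMul_eq_zero 0 (by simpa using hxA) hxB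
    · obtain ⟨N, hN, B, hB, x, hx, hxN, hxB⟩ :=
        exists_fromCols_vecMul_eq_zero_of_not_colorable (K := ℝ) hc
      obtain ⟨t, hA⟩ := PatternClassOver.exists_mul_diagonal_add_one_mem hN
      exact hx <| (h _ hA B hB).eq_zero_of_vecMul_eq_zero 1
        (by simp [← vecMul_vecMul, hxN]) hxB
  · rintro ⟨h₀, h₁⟩ A hA B hB l
    have hAC := PatternClassOver.map_mem (f := Complex.ofRealHom) Complex.ofReal_injective hA
    have hBC := PatternClassOver.map_mem (f := Complex.ofRealHom) Complex.ofReal_injective hB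
    rcases eq_or_ne l 0 with rfl | hl
    · rw [zero_smul, sub_zero]
      exact (h₀.rank_eq_card (PatternClassOver.fromCols_mem_iff.2 ⟨hAC, hBC⟩)).trans
        (Fintype.card_fin n)
    · exact (h₁.rank_eq_card (PatternClassOver.fromCols_mem_iff.2
        ⟨PatternClassOver.sub_smul_one_mem_barPattern hAC hl, hBC⟩)).trans (Fintype.card_fin n)
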